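/- Let X be a Banach space with normalized monotone Schauder basis (e_n) dominating the summing basis with constant C_1 and with submultiplicative dual norm with constant C_2 (on finitely supported functionals). Then for every w*-convergent series x* = w*-∑ λ_n e_n^* in X^*, the diagonal operator T with T e_n = λ_n e_n satisfies C_1·‖x*‖ ≤ ‖T‖ ≤ C_2·‖x*‖. -/

import Mathlib

/-!
A diagonal operator and the functional `x*` are both determined by their values on the basis,
so `e_i^* ∘ T = λ_i e_i^*` and `x*(e_k) = λ_k`. The partial sums of `T x` are then
`∑_{i<n} λ_i e_i^*(x) e_i`: domination of the summing basis bounds them below by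
`C₁ |∑_{i<n} λ_i e_i^*(x)| → C₁ |x*(x)|`. For the upper bound, test such a partial sum against a
norming functional `f`; its value is `(∑_{i<n} λ_i f(e_i) e_i^*)(x)`, a product in the dual of the
two finitely supported functionals `∑ λ_i e_i^*` and `∑ f(e_i) e_i^*`, which by monotonicity of
the basis have norms at most `‖x*‖` and `‖f‖ ≤ 1`.
-/

open Finset Filter

section SchauderBasis

variable {X : Type*} [SeminormedAddCommGroup X] [NormedSpace ℝ X] {e : ℕ → X}
  {es : ℕ → X →L[ℝ] ℝ} {lam : ℕ → ℝ}

theorem eq_of_eq_on_basis {Y : Type*} [NormedAddCommGroup Y] [NormedSpace ℝ Y]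
    (hexp : ∀ x : X, Tendsto (fun n => ∑ i ∈ range n, es i x • e i) atTop (nhds x))
    {f g : X →L[ℝ] Y} (h : ∀ k, f (e k) = g (e k)) : f = g := by
  ext x
  refine tendsto_nhds_unique ((f.continuous.tendsto x).comp (hexp x))
    (((g.continuous.tendsto x).comp (hexp x)).congr fun n => ?_)
  simp [map_sum, h]

theorem norm_le_of_forall_norm_partialSum_le {x : X} {c : ℝ}
    (hx : Tendsto (fun n => ∑ i ∈ range n, es i x • e i) atTop (nhds x))
    (h : ∀ n, ‖∑ i ∈ range n, es i x • e i‖ ≤ c) : ‖x‖ ≤ c :=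
  le_of_tendsto' ((continuous_norm.tendsto x).comp hx) h

theorem norm_sum_apply_basis_smul_coord_le
    (hmono : ∀ (x : X) (n : ℕ), ‖∑ i ∈ range n, es i x • e i‖ ≤ ‖x‖)
    (f : X →L[ℝ] ℝ) (n : ℕ) : ‖∑ i ∈ range n, f (e i) • es i‖ ≤ ‖f‖ := by
  refine ContinuousLinearMap.opNorm_le_bound _ (norm_nonneg f) fun y => ?_
  have hf : (∑ i ∈ range n, f (e i) • es i) y = f (∑ i ∈ range n, es i y • e i) := by
    simp [map_sum, mul_comm]
  rw [hf]
  exact (f.le_opNorm _).trans (mul_le_mul_of_nonneg_left (hmono y n) (norm_nonneg f))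

theorem coord_apply_of_diagonal (hbi : ∀ n m, es n (e m) = if n = m then 1 else 0)
    (hexp : ∀ x : X, Tendsto (fun n => ∑ i ∈ range n, es i x • e i) atTop (nhds x))
    {T : X →L[ℝ] X} (hT : ∀ k, T (e k) = lam k • e k) (i : ℕ) (x : X) :
    es i (T x) = lam i * es i x := by
  have hcomp : (es i).comp T = lam i • es i := eq_of_eq_on_basis hexp fun k => by
    by_cases hik : i = k <;> simp [hT, hbi, hik]
  simpa using DFunLike.congr_fun hcomp x

theorem apply_basis_of_tendsto_sum (hbi : ∀ n m, es n (e m) = if n = m then 1 else 0)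
    {xstar : X →L[ℝ] ℝ} {k : ℕ}
    (hxstar : Tendsto (fun N => ∑ i ∈ range N, lam i * es i (e k)) atTop (nhds (xstar (e k)))) :
    xstar (e k) = lam k := by
  refine tendsto_nhds_unique hxstar (tendsto_const_nhds.congr' ?_)
  filter_upwards [eventually_gt_atTop k] with N hN
  simp [hbi, hN]

theorem mul_abs_apply_le_norm_diagonal_apply {C₁ : ℝ}
    (hdom : ∀ (n : ℕ) (μ : ℕ → ℝ), C₁ * |∑ i ∈ range n, μ i| ≤ ‖∑ i ∈ range n, μ i • e i‖)
    (hmono : ∀ (x : X) (n : ℕ), ‖∑ i ∈ range n, es i x • e i‖ ≤ ‖x‖)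
    {T : X →L[ℝ] X} (hcoord : ∀ i x, es i (T x) = lam i * es i x) {xstar : X →L[ℝ] ℝ} {x : X}
    (hxstar : Tendsto (fun N => ∑ i ∈ range N, lam i * es i x) atTop (nhds (xstar x))) :
    C₁ * |xstar x| ≤ ‖T x‖ := by
  refine le_of_tendsto' (tendsto_const_nhds.mul hxstar.abs) fun n => ?_
  calc C₁ * |∑ i ∈ range n, lam i * es i x|
      ≤ ‖∑ i ∈ range n, (lam i * es i x) • e i‖ := hdom n _
    _ = ‖∑ i ∈ range n, es i (T x) • e i‖ := by simp only [hcoord]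
    _ ≤ ‖T x‖ := hmono (T x) n

theorem norm_partialSum_diagonal_apply_le {C₂ M : ℝ} (hC₂ : 0 ≤ C₂)
    (hsub : ∀ (n : ℕ) (a b : ℕ → ℝ), ‖∑ i ∈ range n, (a i * b i) • es i‖ ≤
      C₂ * ‖∑ i ∈ range n, a i • es i‖ * ‖∑ i ∈ range n, b i • es i‖)
    (hmono : ∀ (x : X) (n : ℕ), ‖∑ i ∈ range n, es i x • e i‖ ≤ ‖x‖)
    (hM : ∀ n, ‖∑ i ∈ range n, lam i • es i‖ ≤ M)
    {T : X →L[ℝ] X} (hcoord : ∀ i x, es i (T x) = lam i * es i x) (x : X) (n : ℕ) :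
    ‖∑ i ∈ range n, es i (T x) • e i‖ ≤ C₂ * M * ‖x‖ := by
  obtain ⟨f, hf, hfv⟩ := exists_dual_vector'' ℝ (∑ i ∈ range n, es i (T x) • e i)
  set g := ∑ i ∈ range n, (lam i * f (e i)) • es i
  calc ‖∑ i ∈ range n, es i (T x) • e i‖ = f (∑ i ∈ range n, es i (T x) • e i) := by
        simpa using hfv.symm
    _ = g x := by
        simp only [g, map_sum, map_smul, smul_eq_mul, hcoord, _root_.sum_apply,
          smul_apply]
        exact sum_congr rfl fun i _ => by ring
    _ ≤ ‖g‖ * ‖x‖ := (Real.le_norm_self _).trans (g.le_opNorm x)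
    _ ≤ C₂ * M * 1 * ‖x‖ := by
        gcongr
        refine (hsub n lam fun i => f (e i)).trans ?_
        gcongr
        · exact mul_nonneg hC₂ ((norm_nonneg _).trans (hM 0))
        · exact hM n
        · exact (norm_sum_apply_basis_smul_coord_le hmono f n).trans hf
    _ = C₂ * M * ‖x‖ := by ring

end SchauderBasis

theorem stmt14_general {X : Type*} [NormedAddCommGroup X] [NormedSpace ℝ X]
    (e : ℕ → X) (es : ℕ → X →L[ℝ] ℝ) (C₁ C₂ : ℝ) (hC₁ : 0 < C₁) (hC₂ : 0 < C₂)
    (hbi : ∀ n m, es n (e m) = if n = m then 1 else 0)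
    (hmono : ∀ (x : X) (n : ℕ), ‖∑ i ∈ range n, es i x • e i‖ ≤ ‖x‖)
    (hexp : ∀ x : X,
      Tendsto (fun n => ∑ i ∈ range n, es i x • e i) atTop (nhds x))
    (hdom : ∀ (n : ℕ) (μ : ℕ → ℝ),
      C₁ * |∑ i ∈ range n, μ i| ≤ ‖∑ i ∈ range n, μ i • e i‖)
    (hsub : ∀ (n : ℕ) (a b : ℕ → ℝ),
      ‖∑ i ∈ range n, (a i * b i) • es i‖ ≤
        C₂ * ‖∑ i ∈ range n, a i • es i‖ * ‖∑ i ∈ range n, b i • es i‖)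
    (lam : ℕ → ℝ) (xstar : X →L[ℝ] ℝ)
    -- `xstar` is the w*-sum of the series `∑ λ_n e_n^*`
    (hxstar : ∀ x : X,
      Tendsto (fun N => ∑ i ∈ range N, lam i * es i x) atTop (nhds (xstar x)))
    (T : X →L[ℝ] X) (hT : ∀ k, T (e k) = lam k • e k) :
    C₁ * ‖xstar‖ ≤ ‖T‖ ∧ ‖T‖ ≤ C₂ * ‖xstar‖ := by
  have hcoord := coord_apply_of_diagonal hbi hexp hT
  have hlam (n : ℕ) : ‖∑ i ∈ range n, lam i • es i‖ ≤ ‖xstar‖ := by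
    simpa only [apply_basis_of_tendsto_sum hbi (hxstar _)] using
      norm_sum_apply_basis_smul_coord_le hmono xstar n
  constructor
  · calc C₁ * ‖xstar‖ = ‖C₁ • xstar‖ := by rw [norm_smul, Real.norm_of_nonneg hC₁.le]
      _ ≤ ‖T‖ := (C₁ • xstar).opNorm_le_bound (norm_nonneg T) fun x => by
          simpa [abs_mul, abs_of_pos hC₁] using
            (mul_abs_apply_le_norm_diagonal_apply hdom hmono hcoord (hxstar x)).trans
              (T.le_opNorm x)
  · exact T.opNorm_le_bound (by positivity) fun x =>
      norm_le_of_forall_norm_partialSum_le (hexp (T x))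
        (norm_partialSum_diagonal_apply_le hC₂.le hsub hmono hlam hcoord x)

/-- Let `X` have a normalized monotone Schauder basis `(e n)` dominating the
summing basis with constant `C₁ > 0`, with submultiplicative dual norm with
constant `C₂`.  If `x* = w*-∑ λ_n e_n^*` and `T` is the diagonal operator
with `T e_n = λ_n e_n`, then `C₁ ‖x*‖ ≤ ‖T‖ ≤ C₂ ‖x*‖`. -/
theorem stmt14 {X : Type*} [NormedAddCommGroup X] [NormedSpace ℝ X] [CompleteSpace X]
    (e : ℕ → X) (es : ℕ → X →L[ℝ] ℝ) (C₁ C₂ : ℝ) (hC₁ : 0 < C₁) (hC₂ : 0 < C₂)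
    (hbi : ∀ n m, es n (e m) = if n = m then 1 else 0)
    (hnormal : ∀ n, ‖e n‖ = 1)
    (hmono : ∀ (x : X) (n : ℕ), ‖∑ i ∈ range n, es i x • e i‖ ≤ ‖x‖)
    (hexp : ∀ x : X,
      Tendsto (fun n => ∑ i ∈ range n, es i x • e i) atTop (nhds x))
    (hdom : ∀ (n : ℕ) (μ : ℕ → ℝ),
      C₁ * |∑ i ∈ range n, μ i| ≤ ‖∑ i ∈ range n, μ i • e i‖)
    (hsub : ∀ (n : ℕ) (a b : ℕ → ℝ),
      ‖∑ i ∈ range n, (a i * b i) • es i‖ ≤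
        C₂ * ‖∑ i ∈ range n, a i • es i‖ * ‖∑ i ∈ range n, b i • es i‖)
    (lam : ℕ → ℝ) (xstar : X →L[ℝ] ℝ)
    -- `xstar` is the w*-sum of the series `∑ λ_n e_n^*`
    (hxstar : ∀ x : X,
      Tendsto (fun N => ∑ i ∈ range N, lam i * es i x) atTop (nhds (xstar x)))
    (T : X →L[ℝ] X) (hT : ∀ k, T (e k) = lam k • e k) :
    C₁ * ‖xstar‖ ≤ ‖T‖ ∧ ‖T‖ ≤ C₂ * ‖xstar‖ :=
  stmt14_general e es C₁ C₂ hC₁ hC₂ hbi hmono hexp hdom hsub lam xstar hxstar T hT
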